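/- arXiv:1812.01648 — 2 statements merged into one kernel-verified Lean document; each statement's English description precedes it below -/
import Mathlib

section
/- Suppose 𝒦(Σ) ∩ int(𝒴) ≠ ∅. Then ⋃_{ℓ≥1} F^ℓ(0) = ⋃_{ℓ≥1} F^ℓ(𝒯*(Σ)), i.e., the reachable set R(F) equals the union of images of the strongly reachable subspace under iterates of F. -/
open Pointwise

/-- `ℓ`-fold iterate of a set-valued map: `SIter F ℓ x = F^ℓ(x)`. -/
def SIter {E : Type*} (F : E → Set E) : ℕ → E → Set E
  | 0, x => {x}
  | n + 1, x => ⋃ y ∈ SIter F n x, F y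

/-- `X(F)`: initial states of infinite solutions of `x_{k+1} ∈ F(x_k)`. -/
def XSet {E : Type*} (F : E → Set E) : Set E :=
  {x | ∃ f : ℕ → E, f 0 = x ∧ ∀ k, f (k + 1) ∈ F (f k)}

/-- `R(F) = ⋃_{ℓ ≥ 1} F^ℓ(0)`. -/
def RSet {E : Type*} [Zero E] (F : E → Set E) : Set E :=
  ⋃ ℓ ∈ {ℓ : ℕ | 1 ≤ ℓ}, SIter F ℓ 0

/-- The set-valued map `F(x) = Ax + B D^{-1}(𝒴 − Cx)` of the constrained system `(Σ,𝒴)`. -/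
def Fmap {n m s : ℕ} (A : Matrix (Fin n) (Fin n) ℝ) (B : Matrix (Fin n) (Fin m) ℝ)
    (C : Matrix (Fin s) (Fin n) ℝ) (D : Matrix (Fin s) (Fin m) ℝ)
    (Y : Set (Fin s → ℝ)) : (Fin n → ℝ) → Set (Fin n → ℝ) :=
  fun x => {z | ∃ u : Fin m → ℝ, C.mulVec x + D.mulVec u ∈ Y ∧ z = A.mulVec x + B.mulVec u}

/-- The strongly reachable subspace `𝒯*(Σ)`: states reachable from `0` with the output
kept identically zero along the way. -/
def Tstar {n m s : ℕ} (A : Matrix (Fin n) (Fin n) ℝ) (B : Matrix (Fin n) (Fin m) ℝ)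
    (C : Matrix (Fin s) (Fin n) ℝ) (D : Matrix (Fin s) (Fin m) ℝ) : Set (Fin n → ℝ) :=
  RSet (Fmap A B C D ({0} : Set (Fin s → ℝ)))

/-- The weakly unobservable subspace `𝒱*(Σ)`: initial states for which an input exists
making the output identically zero. -/
def Vstar {n m s : ℕ} (A : Matrix (Fin n) (Fin n) ℝ) (B : Matrix (Fin n) (Fin m) ℝ)
    (C : Matrix (Fin s) (Fin n) ℝ) (D : Matrix (Fin s) (Fin m) ℝ) : Set (Fin n → ℝ) :=
  XSet (Fmap A B C D ({0} : Set (Fin s → ℝ)))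

/-- `𝒦(Σ) = im D + C 𝒯*(Σ)`. -/
def Kset {n m s : ℕ} (A : Matrix (Fin n) (Fin n) ℝ) (B : Matrix (Fin n) (Fin m) ℝ)
    (C : Matrix (Fin s) (Fin n) ℝ) (D : Matrix (Fin s) (Fin m) ℝ) : Set (Fin s → ℝ) :=
  {y | ∃ (u : Fin m → ℝ) (t : Fin n → ℝ), t ∈ Tstar A B C D ∧ y = D.mulVec u + C.mulVec t}

/-- The image `im [C D]`. -/
def CDrange {n m s : ℕ} (C : Matrix (Fin s) (Fin n) ℝ) (D : Matrix (Fin s) (Fin m) ℝ) :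
    Set (Fin s → ℝ) :=
  Set.range (fun p : (Fin n → ℝ) × (Fin m → ℝ) => C.mulVec p.1 + D.mulVec p.2)

/-! Since `0 ∈ 𝒴`, every trajectory with zero output is admissible for `F`, so
`𝒯*(Σ) ⊆ R(F)`; a trajectory from `0` into `𝒯*(Σ)` can then be continued by any trajectory
of `F`. Conversely `0 ∈ 𝒯*(Σ)`. -/

section SetValuedIteration

variable {E : Type*}

lemma SIter_mono {F G : E → Set E} (h : ∀ x, F x ⊆ G x) (k : ℕ) (x : E) :
    SIter F k x ⊆ SIter G k x := by
  induction k with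
  | zero => exact subset_rfl
  | succ k ih =>
    simp only [SIter]
    exact Set.biUnion_mono ih fun y _ => h y

lemma SIter_add {F : E → Set E} {x₀ x z : E} {k : ℕ} (hx : x ∈ SIter F k x₀) :
    ∀ {ℓ : ℕ}, z ∈ SIter F ℓ x → z ∈ SIter F (k + ℓ) x₀
  | 0, hz => by
    rw [SIter, Set.mem_singleton_iff] at hz
    exact hz ▸ hx
  | ℓ + 1, hz => by
    simp only [SIter, Set.mem_iUnion] at hz ⊢
    obtain ⟨y, hy, hzy⟩ := hz
    exact ⟨y, SIter_add hx hy, hzy⟩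

lemma RSet_eq_biUnion_SIter [Zero E] {F : E → Set E} {T : Set E} (h0T : (0 : E) ∈ T)
    (hTR : T ⊆ RSet F) :
    RSet F = ⋃ ℓ ∈ {ℓ : ℕ | 1 ≤ ℓ}, ⋃ x ∈ T, SIter F ℓ x := by
  apply Set.Subset.antisymm
  · exact Set.iUnion₂_mono fun ℓ _ => Set.subset_biUnion_of_mem (u := (SIter F ℓ ·)) h0T
  · simp only [Set.iUnion_subset_iff]
    intro ℓ hℓ x hxT z hz
    obtain ⟨k, hk, hxk⟩ := Set.mem_iUnion₂.1 (hTR hxT)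
    exact Set.mem_iUnion₂.2 ⟨k + ℓ, le_trans hk (Nat.le_add_right k ℓ), SIter_add hxk hz⟩

end SetValuedIteration

section ConstrainedSystem

variable {n m s : ℕ} (A : Matrix (Fin n) (Fin n) ℝ) (B : Matrix (Fin n) (Fin m) ℝ)
    (C : Matrix (Fin s) (Fin n) ℝ) (D : Matrix (Fin s) (Fin m) ℝ)

lemma Fmap_mono {Y Y' : Set (Fin s → ℝ)} (h : Y ⊆ Y') (x : Fin n → ℝ) :
    Fmap A B C D Y x ⊆ Fmap A B C D Y' x := by
  rintro z ⟨u, hu, rfl⟩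
  exact ⟨u, h hu, rfl⟩

lemma zero_mem_Tstar : (0 : Fin n → ℝ) ∈ Tstar A B C D := by
  refine Set.mem_biUnion (x := 1) (le_refl 1) ?_
  simp only [SIter, Set.mem_iUnion]
  exact ⟨0, rfl, 0, by simp, by simp⟩

lemma Tstar_subset_RSet {Y : Set (Fin s → ℝ)} (h0Y : (0 : Fin s → ℝ) ∈ Y) :
    Tstar A B C D ⊆ RSet (Fmap A B C D Y) :=
  Set.iUnion₂_mono fun ℓ _ =>
    SIter_mono (Fmap_mono A B C D (Set.singleton_subset_iff.2 h0Y)) ℓ 0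

end ConstrainedSystem

theorem stmt18_general {n m s : ℕ} (A : Matrix (Fin n) (Fin n) ℝ) (B : Matrix (Fin n) (Fin m) ℝ)
    (C : Matrix (Fin s) (Fin n) ℝ) (D : Matrix (Fin s) (Fin m) ℝ)
    (Y : Set (Fin s → ℝ)) (h0Y : (0 : Fin s → ℝ) ∈ Y) :
    RSet (Fmap A B C D Y) =
      ⋃ ℓ ∈ {ℓ : ℕ | 1 ≤ ℓ}, ⋃ x ∈ Tstar A B C D, SIter (Fmap A B C D Y) ℓ x :=
  RSet_eq_biUnion_SIter (zero_mem_Tstar A B C D) (Tstar_subset_RSet A B C D h0Y)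

/-- If `𝒦(Σ) ∩ int 𝒴 ≠ ∅`, then `R(F) = ⋃_{ℓ≥1} F^ℓ(𝒯*(Σ))`. -/
theorem stmt18 {n m s : ℕ} (A : Matrix (Fin n) (Fin n) ℝ) (B : Matrix (Fin n) (Fin m) ℝ)
    (C : Matrix (Fin s) (Fin n) ℝ) (D : Matrix (Fin s) (Fin m) ℝ)
    (Y : Set (Fin s → ℝ)) (hY : Convex ℝ Y) (h0Y : (0 : Fin s → ℝ) ∈ Y)
    (hsolid : (interior (Y ∩ CDrange C D)).Nonempty)
    (hint : (Kset A B C D ∩ interior Y).Nonempty) :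
    RSet (Fmap A B C D Y) =
      ⋃ ℓ ∈ {ℓ : ℕ | 1 ≤ ℓ}, ⋃ x ∈ Tstar A B C D, SIter (Fmap A B C D Y) ℓ x :=
  stmt18_general A B C D Y h0Y
end

section
/- Let H: ℝ^n ⇉ ℝ^n be defined by gr(H) = {(x,y) ∈ ℝ × ℝ | |x| ≤ 1 and y ≥ 2|x|} (n = 1). Then X(H) = {0} (hence H is reachable), but X(H) is not finitely determined (X_ℓ(H) ≠ X(H) for every ℓ ≥ 1) and R(H) ≠ ℝ. -/
/-- The convex set-valued map with graph `{(x,y) | |x| ≤ 1 and y ≥ 2|x|}`. -/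
def Hex : ℝ → Set ℝ := fun x => {y | |x| ≤ 1 ∧ 2 * |x| ≤ y}

/-!
A trajectory of `Hex` at least doubles its absolute value at every step while staying in
`[-1, 1]`, so from `x ≠ 0` it leaves `[-1, 1]` after about `log₂ (1 / |x|)` steps: only `0`
starts an infinite trajectory. Conversely `x = 2⁻ˡ` starts the trajectory `x, 2x, …, 2ˡx = 1`
of length `ℓ`. Finally `Hex` takes only nonnegative values, so `-1 ∉ R(Hex)`.
-/

section SetValued

variable {E : Type*} {F : E → Set E}

theorem mem_SIter_succ {n : ℕ} {x z : E} :
    z ∈ SIter F (n + 1) x ↔ ∃ y ∈ SIter F n x, z ∈ F y := by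
  simp only [SIter, Set.mem_iUnion, exists_prop]

theorem mem_XSet_of_mem_self {x : E} (hx : x ∈ F x) : x ∈ XSet F :=
  ⟨fun _ => x, rfl, fun _ => hx⟩

theorem zero_mem_RSet_of_zero_mem [Zero E] (h : (0 : E) ∈ F 0) : (0 : E) ∈ RSet F :=
  Set.mem_biUnion (Set.mem_ofPred.2 le_rfl) (mem_SIter_succ.2 ⟨0, rfl, h⟩)

end SetValued

theorem nonneg_of_mem_Hex {x y : ℝ} (hy : y ∈ Hex x) : 0 ≤ y :=
  (mul_nonneg zero_le_two (abs_nonneg x)).trans hy.2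

theorem nonneg_of_mem_SIter_Hex {ℓ : ℕ} (hℓ : 1 ≤ ℓ) {x z : ℝ} (hz : z ∈ SIter Hex ℓ x) :
    0 ≤ z := by
  obtain ⟨n, rfl⟩ := Nat.exists_eq_add_of_le' hℓ
  obtain ⟨y, -, hzy⟩ := mem_SIter_succ.1 hz
  exact nonneg_of_mem_Hex hzy

theorem RSet_Hex_subset_Ici : RSet Hex ⊆ Set.Ici 0 := by
  simp only [RSet, Set.iUnion_subset_iff]
  exact fun ℓ hℓ z hz => nonneg_of_mem_SIter_Hex hℓ hz

theorem two_pow_mul_mem_SIter_Hex {x : ℝ} (hx : 0 ≤ x) :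
    ∀ n : ℕ, (2 : ℝ) ^ n * x ≤ 1 → (2 : ℝ) ^ n * x ∈ SIter Hex n x
  | 0, _ => by simp [SIter]
  | n + 1, h => by
    have hnn : (0 : ℝ) ≤ 2 ^ n * x := by positivity
    have hle : (2 : ℝ) ^ n * x ≤ 1 := by rw [pow_succ] at h; linarith
    refine mem_SIter_succ.2 ⟨_, two_pow_mul_mem_SIter_Hex hx n hle, ?_, ?_⟩
    · rwa [abs_of_nonneg hnn]
    · rw [abs_of_nonneg hnn, pow_succ]; linarith

theorem two_pow_mul_abs_le_abs_of_trajectory {f : ℕ → ℝ} (hf : ∀ k, f (k + 1) ∈ Hex (f k)) :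
    ∀ k : ℕ, 2 ^ k * |f 0| ≤ |f k|
  | 0 => by simp
  | k + 1 => by
    have ih := two_pow_mul_abs_le_abs_of_trajectory hf k
    calc 2 ^ (k + 1) * |f 0| = 2 * (2 ^ k * |f 0|) := by ring
      _ ≤ 2 * |f k| := by linarith
      _ ≤ f (k + 1) := (hf k).2
      _ ≤ |f (k + 1)| := le_abs_self _

theorem eq_zero_of_forall_two_pow_mul_le_one {a : ℝ} (ha : 0 ≤ a)
    (h : ∀ k : ℕ, 2 ^ k * a ≤ 1) : a = 0 := by
  by_contra ha0
  have hapos : 0 < a := lt_of_le_of_ne ha (Ne.symm ha0)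
  obtain ⟨k, hk⟩ := pow_unbounded_of_one_lt a⁻¹ one_lt_two
  have := (inv_lt_iff_one_lt_mul₀ hapos).1 hk
  linarith [h k]

theorem XSet_Hex : XSet Hex = {0} := by
  refine Set.eq_singleton_iff_unique_mem.2 ⟨mem_XSet_of_mem_self (by simp [Hex]), ?_⟩
  rintro x ⟨f, rfl, hf⟩
  refine abs_eq_zero.1 (eq_zero_of_forall_two_pow_mul_le_one (abs_nonneg _) fun k => ?_)
  exact (two_pow_mul_abs_le_abs_of_trajectory hf k).trans (hf k).1

/-- For `Hex`: `X(Hex) = {0}` (hence `Hex` is reachable), `X(Hex)` is not finitely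
determined (`X_ℓ(Hex) ≠ X(Hex)` for every `ℓ ≥ 1`), and `R(Hex) ≠ ℝ`. -/
theorem stmt19 :
    XSet Hex = {0} ∧ XSet Hex ⊆ RSet Hex ∧
      (∀ ℓ : ℕ, 1 ≤ ℓ → {x : ℝ | (SIter Hex ℓ x).Nonempty} ≠ XSet Hex) ∧
      RSet Hex ≠ Set.univ := by
  refine ⟨XSet_Hex, ?_, fun ℓ _ hX => ?_, fun hR => ?_⟩
  · rw [XSet_Hex, Set.singleton_subset_iff]
    exact zero_mem_RSet_of_zero_mem (by simp [Hex])
  · have hlen : (SIter Hex ℓ ((2 : ℝ) ^ ℓ)⁻¹).Nonempty :=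
      ⟨_, two_pow_mul_mem_SIter_Hex (by positivity) ℓ (by simp)⟩
    have : ((2 : ℝ) ^ ℓ)⁻¹ ∈ XSet Hex := hX ▸ hlen
    rw [XSet_Hex] at this
    exact (by positivity : ((2 : ℝ) ^ ℓ)⁻¹ ≠ 0) this
  · have : (-1 : ℝ) ∈ Set.Ici 0 := RSet_Hex_subset_Ici (hR ▸ Set.mem_univ _)
    norm_num at this
end
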